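/- arXiv:2111.04956 — 6 statements merged into one kernel-verified Lean document; each statement's English description precedes it below -/
import Mathlib

section
/- A signed graph (G,σ) on n vertices is a parity signed graph if and only if it can be obtained from the all-positive signed graph (G,+) by switching at a set of vertices of cardinality ⌊n/2⌋. -/
open scoped Classical

variable {V : Type*}

namespace PSG

lemma range_odd_card (n : ℕ) :
    ((Finset.range n).filter (fun i => i % 2 = 1)).card = n / 2 := by
  induction n with
  | zero => simp
  | succ n ih =>
    rw [Finset.range_add_one, Finset.filter_insert]
    by_cases h : n % 2 = 1
    · rw [if_pos h, Finset.card_insert_of_notMem (by simp)]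
      omega
    · rw [if_neg h]; omega

lemma fin_odd_card (n : ℕ) :
    (Finset.univ.filter (fun i : Fin n => (i : ℕ) % 2 = 1)).card = n / 2 := by
  rw [← range_odd_card n]
  refine Finset.card_bij (fun i _ => (i : ℕ)) ?_ ?_ ?_
  · intro a ha
    simp only [Finset.mem_filter, Finset.mem_univ, true_and] at ha
    simp only [Finset.mem_filter, Finset.mem_range]
    exact ⟨a.isLt, ha⟩
  · intro a _ b _ h; exact Fin.val_injective h
  · intro b hb
    simp only [Finset.mem_filter, Finset.mem_range] at hb
    exact ⟨⟨b, hb.1⟩, by simp [hb.2], rfl⟩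

lemma exists_equiv_finset {V : Type*} [Fintype V] [DecidableEq V]
    (A : Finset V) (B : Finset (Fin (Fintype.card V))) (h : A.card = B.card) :
    ∃ f : V ≃ Fin (Fintype.card V), ∀ v, f v ∈ B ↔ v ∈ A := by
  have hc : (Aᶜ : Finset V).card = (Bᶜ : Finset (Fin (Fintype.card V))).card := by
    rw [Finset.card_compl, Finset.card_compl, h, Fintype.card_fin]
  let e1 : ↥A ≃ ↥B := Finset.equivOfCardEq h
  let e2 : ↥(Aᶜ : Finset V) ≃ ↥(Bᶜ : Finset (Fin (Fintype.card V))) :=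
    Finset.equivOfCardEq hc
  let e1' : ↥(A : Set V) ≃ ↥(B : Set (Fin (Fintype.card V))) :=
    (Equiv.subtypeEquivRight (fun x => by simp)).trans
      (e1.trans (Equiv.subtypeEquivRight (fun x => by simp)))
  let e2' : ↥((A : Set V)ᶜ) ≃ ↥((B : Set (Fin (Fintype.card V)))ᶜ) :=
    (Equiv.subtypeEquivRight (fun x => by simp)).trans
      (e2.trans (Equiv.subtypeEquivRight (fun x => by simp)))
  refine ⟨(Equiv.Set.sumCompl (A : Set V)).symm.trans
    ((e1'.sumCongr e2').trans (Equiv.Set.sumCompl (B : Set (Fin (Fintype.card V))))), ?_⟩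
  intro v
  by_cases hv : v ∈ A
  · simp only [Equiv.trans_apply]
    rw [Equiv.Set.sumCompl_symm_apply_of_mem (s := (A : Set V)) (by simpa using hv)]
    simp only [Equiv.sumCongr_apply, Sum.map_inl, Equiv.Set.sumCompl_apply_inl]
    constructor
    · intro _; exact hv
    · intro _; exact Finset.mem_coe.mp (e1' ⟨v, by simpa using hv⟩).2
  · simp only [Equiv.trans_apply]
    rw [Equiv.Set.sumCompl_symm_apply_of_notMem (s := (A : Set V)) (by simpa using hv)]
    simp only [Equiv.sumCongr_apply, Sum.map_inr, Equiv.Set.sumCompl_apply_inr]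
    constructor
    · intro hmem
      exfalso
      have := (e2' ⟨v, by simpa using hv⟩).2
      simp only [Set.mem_compl_iff, Finset.mem_coe] at this
      exact this hmem
    · intro hv'; exact absurd hv' hv


/-- A bipartition of the vertex set given by `A` and its complement is
near-balanced (a parity-partition) if the sizes differ by at most 1. -/
def Balanced [Fintype V] [DecidableEq V] (A : Finset V) : Prop :=
  |(A.card : ℤ) - ((Aᶜ : Finset V).card : ℤ)| ≤ 1

/-- The number of edges of `G` between `A` and its complement
(the number of negative edges of the associated parity signature). -/
def cut [Fintype V] [DecidableEq V] (G : SimpleGraph V) [DecidableRel G.Adj]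
    (A : Finset V) : ℕ :=
  ((A ×ˢ (Aᶜ : Finset V)).filter fun p => G.Adj p.1 p.2).card

/-- `Σ⁻(G)`: the set of numbers of negative edges over all parity signatures. -/
def sigmaSet [Fintype V] [DecidableEq V] (G : SimpleGraph V) [DecidableRel G.Adj] :
    Set ℕ :=
  {k | ∃ A : Finset V, Balanced A ∧ k = cut G A}

/-- The rna number `σ⁻(G)`. -/
noncomputable def rna [Fintype V] [DecidableEq V] (G : SimpleGraph V)
    [DecidableRel G.Adj] : ℕ :=
  sInf (sigmaSet G)

/-- `d⁻(v)`: number of negative edges (crossing edges) at `v`. -/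
def dneg [Fintype V] [DecidableEq V] (G : SimpleGraph V) [DecidableRel G.Adj]
    (A : Finset V) (v : V) : ℕ :=
  (Finset.univ.filter fun u => G.Adj v u ∧ ¬(u ∈ A ↔ v ∈ A)).card

/-- `d⁺(v)`: number of positive edges (same-side edges) at `v`. -/
def dpos [Fintype V] [DecidableEq V] (G : SimpleGraph V) [DecidableRel G.Adj]
    (A : Finset V) (v : V) : ℕ :=
  (Finset.univ.filter fun u => G.Adj v u ∧ (u ∈ A ↔ v ∈ A)).card

/-- The sign-difference `dᐃ(v) = d⁻(v) - d⁺(v)`. -/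
def dDelta [Fintype V] [DecidableEq V] (G : SimpleGraph V) [DecidableRel G.Adj]
    (A : Finset V) (v : V) : ℤ :=
  (dneg G A v : ℤ) - (dpos G A v : ℤ)

/-- `f` is a parity-labeling witnessing that `σ` is a parity-signature of `G`. -/
def IsParityLabeling [Fintype V] (G : SimpleGraph V) (σ : V → V → ℤ)
    (f : V ≃ Fin (Fintype.card V)) : Prop :=
  ∀ u v : V, G.Adj u v →
    σ u v = if ((f u : ℕ) % 2 = (f v : ℕ) % 2) then 1 else -1

/-- `(G, σ)` is a parity signed graph. -/
def IsParitySigned [Fintype V] (G : SimpleGraph V) (σ : V → V → ℤ) : Prop :=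
  ∃ f : V ≃ Fin (Fintype.card V), IsParityLabeling G σ f

/-- The sign multiplier of a switch at the vertex set `U`. -/
def sgn [DecidableEq V] (U : Finset V) (v : V) : ℤ := if v ∈ U then -1 else 1

/-- The signature obtained from `σ` by switching at the set of vertices `U`. -/
def switch [DecidableEq V] (σ : V → V → ℤ) (U : Finset V) : V → V → ℤ :=
  fun a b => sgn U a * sgn U b * σ a b

/-- One parity-switch step: switch at a vertex with odd label and one with even label. -/
def ParitySwitchStep [Fintype V] [DecidableEq V] (G : SimpleGraph V)
    (σ σ' : V → V → ℤ) : Prop :=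
  ∃ f : V ≃ Fin (Fintype.card V), IsParityLabeling G σ f ∧
    ∃ u v : V, (f u : ℕ) % 2 = 1 ∧ (f v : ℕ) % 2 = 0 ∧ σ' = switch σ {u, v}

/-- `G` is the star `K_{1,n-1}` on its vertex set. -/
def IsStar (G : SimpleGraph V) : Prop :=
  ∃ c : V, ∀ a b : V, G.Adj a b ↔ ((a = c ∧ b ≠ c) ∨ (b = c ∧ a ≠ c))

/-- The unordered pair `{a,b}` equals the unordered pair `{u,v}`. -/
def pairEq (a b u v : V) : Prop := (a = u ∧ b = v) ∨ (a = v ∧ b = u)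

/-- `G` is the complete graph minus one edge. -/
def IsCompleteMinusEdge (G : SimpleGraph V) : Prop :=
  ∃ u v : V, u ≠ v ∧ ∀ a b : V, G.Adj a b ↔ (a ≠ b ∧ ¬ pairEq a b u v)

/-- `G` is the complete graph minus the three edges of a triangle. -/
def IsCompleteMinusTriangle (G : SimpleGraph V) : Prop :=
  ∃ u v w : V, u ≠ v ∧ u ≠ w ∧ v ≠ w ∧
    ∀ a b : V, G.Adj a b ↔
      (a ≠ b ∧ ¬ (pairEq a b u v ∨ pairEq a b u w ∨ pairEq a b v w))

/-- `G` is the complete graph minus two nonadjacent (disjoint) edges. -/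
def IsCompleteMinusTwoDisjointEdges (G : SimpleGraph V) : Prop :=
  ∃ u v x y : V, u ≠ v ∧ x ≠ y ∧ u ≠ x ∧ u ≠ y ∧ v ≠ x ∧ v ≠ y ∧
    ∀ a b : V, G.Adj a b ↔ (a ≠ b ∧ ¬ (pairEq a b u v ∨ pairEq a b x y))

/-- `G` is the complete graph minus two adjacent edges. -/
def IsCompleteMinusTwoAdjacentEdges (G : SimpleGraph V) : Prop :=
  ∃ u v w : V, u ≠ v ∧ u ≠ w ∧ v ≠ w ∧
    ∀ a b : V, G.Adj a b ↔ (a ≠ b ∧ ¬ (pairEq a b u v ∨ pairEq a b u w))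

/-- `G` is the join `P₂ ∨ I_{n-2}`: an edge joined completely to an independent set. -/
def IsEdgeJoinIndep (G : SimpleGraph V) : Prop :=
  ∃ a b : V, a ≠ b ∧
    ∀ x y : V, G.Adj x y ↔ (x ≠ y ∧ (x = a ∨ x = b ∨ y = a ∨ y = b))

/-- `(G,σ)` is a parity signed graph iff it can be obtained from
`(G,+)` by switching at a set of vertices of cardinality `⌊n/2⌋`. -/
theorem stmt0 [Fintype V] [DecidableEq V] (G : SimpleGraph V) (σ : V → V → ℤ) :
    IsParitySigned G σ ↔
      ∃ U : Finset V, U.card = Fintype.card V / 2 ∧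
        ∀ a b : V, G.Adj a b → σ a b = switch (fun _ _ => 1) U a b := by
  constructor
  · rintro ⟨f, hf⟩
    refine ⟨Finset.univ.filter (fun v => (f v : ℕ) % 2 = 1), ?_, ?_⟩
    · rw [← fin_odd_card (Fintype.card V)]
      refine Finset.card_bij (fun v _ => f v) ?_ ?_ ?_
      · intro a ha
        simp only [Finset.mem_filter, Finset.mem_univ, true_and] at ha ⊢
        exact ha
      · intro a _ b _ h; exact f.injective h
      · intro b hb
        simp only [Finset.mem_filter, Finset.mem_univ, true_and] at *
        exact ⟨f.symm b, by simpa using hb, f.apply_symm_apply b⟩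
    · intro a b hab
      rw [hf a b hab]
      simp only [switch, sgn, Finset.mem_filter, Finset.mem_univ, true_and, mul_one]
      rcases Nat.mod_two_eq_zero_or_one (f a) with h1 | h1 <;>
        rcases Nat.mod_two_eq_zero_or_one (f b) with h2 | h2 <;>
        simp [h1, h2]
  · rintro ⟨U, hcard, hσ⟩
    obtain ⟨f, hf⟩ := exists_equiv_finset U
      (Finset.univ.filter (fun i : Fin (Fintype.card V) => (i : ℕ) % 2 = 1))
      (by rw [hcard, fin_odd_card])
    refine ⟨f, fun a b hab => ?_⟩
    rw [hσ a b hab]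
    have ha := hf a; have hb := hf b
    simp only [Finset.mem_filter, Finset.mem_univ, true_and] at ha hb
    simp only [switch, sgn, mul_one]
    rcases Nat.mod_two_eq_zero_or_one (f a) with h1 | h1 <;>
      rcases Nat.mod_two_eq_zero_or_one (f b) with h2 | h2 <;>
      simp [h1, h2, ← ha, ← hb]

end PSG
end

section
/- Let (G,σ) be a parity signed graph. Then a signed graph (G,σ') on the same underlying graph is a parity signed graph if and only if (G,σ') can be obtained from (G,σ) by a finite sequence of parity-switches. -/
open scoped Classical

variable {V : Type*}

namespace PSG

lemma swap_labeling [Fintype V] [DecidableEq V] (G : SimpleGraph V) (σ : V → V → ℤ)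
    (f : V ≃ Fin (Fintype.card V)) (hf : IsParityLabeling G σ f)
    (u v : V) (hu : (f u : ℕ) % 2 = 1) (hv : (f v : ℕ) % 2 = 0) :
    IsParityLabeling G (switch σ {u, v}) (f.trans (Equiv.swap (f u) (f v))) := by
  intro a b hab
  rw [switch, hf a b hab]
  simp only [Equiv.trans_apply, Equiv.swap_apply_def, sgn, Finset.mem_insert,
    Finset.mem_singleton, f.injective.eq_iff]
  rcases Nat.mod_two_eq_zero_or_one ((f a : ℕ)) with ha | ha <;>
  rcases Nat.mod_two_eq_zero_or_one ((f b : ℕ)) with hb | hb <;>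
  by_cases hau : a = u <;> by_cases hav : a = v <;>
  by_cases hbu : b = u <;> by_cases hbv : b = v <;>
  subst_vars <;> simp_all

/-- the even-label set of a labeling -/
noncomputable def evens [Fintype V] [DecidableEq V] (f : V ≃ Fin (Fintype.card V)) : Finset V :=
  Finset.univ.filter fun v => (f v : ℕ) % 2 = 0

lemma evens_card_eq [Fintype V] [DecidableEq V] (f g : V ≃ Fin (Fintype.card V)) :
    (evens f).card = (evens g).card := by
  apply Finset.card_bij' (fun v _ => g.symm (f v)) (fun w _ => f.symm (g w)) <;>
    simp [evens]

lemma reach [Fintype V] [DecidableEq V] (G : SimpleGraph V) (σ' : V → V → ℤ)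
    (g : V ≃ Fin (Fintype.card V)) (hg : IsParityLabeling G σ' g) :
    ∀ (k : ℕ) (σ : V → V → ℤ) (f : V ≃ Fin (Fintype.card V)), IsParityLabeling G σ f →
      (evens f \ evens g).card = k →
      ∃ τ, Relation.ReflTransGen (ParitySwitchStep G) σ τ ∧
        ∀ a b : V, G.Adj a b → τ a b = σ' a b := by
  intro k
  induction k with
  | zero =>
    intro σ f hf hcard
    have hsub : evens f ⊆ evens g := by
      rw [Finset.card_eq_zero, Finset.sdiff_eq_empty_iff_subset] at hcard
      exact hcard
    have heq : evens f = evens g :=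
      Finset.eq_of_subset_of_card_le hsub (evens_card_eq g f).le
    refine ⟨σ, Relation.ReflTransGen.refl, fun a b hab => ?_⟩
    rw [hf a b hab, hg a b hab]
    have hpar : ∀ w : V, (f w : ℕ) % 2 = (g w : ℕ) % 2 := by
      intro w
      have := Finset.ext_iff.mp heq w
      simp [evens] at this
      omega
    rw [hpar a, hpar b]
  | succ k ih =>
    intro σ f hf hcard
    have h1 : (evens f \ evens g).Nonempty := by
      rw [← Finset.card_pos, hcard]; omega
    obtain ⟨u, hu⟩ := h1
    have h2 : (evens g \ evens f).Nonempty := by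
      rw [← Finset.card_pos, Finset.card_sdiff_comm (evens_card_eq g f), hcard]; omega
    obtain ⟨v, hv⟩ := h2
    rw [Finset.mem_sdiff] at hu hv
    have hfu : (f u : ℕ) % 2 = 0 := by have := hu.1; simpa [evens] using this
    have hfv : (f v : ℕ) % 2 = 1 := by
      have := hv.2; simp [evens] at this; omega
    have hgu : (g u : ℕ) % 2 = 1 := by
      have := hu.2; simp [evens] at this; omega
    have hgv : (g v : ℕ) % 2 = 0 := by have := hv.1; simpa [evens] using this
    set σ₂ := switch σ {v, u} with hσ₂
    set f₂ := f.trans (Equiv.swap (f v) (f u)) with hf₂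
    have hf₂lab : IsParityLabeling G σ₂ f₂ := swap_labeling G σ f hf v u hfv hfu
    have hstep : ParitySwitchStep G σ σ₂ := ⟨f, hf, v, u, hfv, hfu, rfl⟩
    have hmem : ∀ w : V, w ∈ evens f₂ ↔ (w = v ∨ (w ≠ u ∧ w ∈ evens f)) := by
      intro w
      simp only [evens, Finset.mem_filter, Finset.mem_univ, true_and, hf₂,
        Equiv.trans_apply, Equiv.swap_apply_def, f.injective.eq_iff]
      by_cases hwv : w = v <;> by_cases hwu : w = u <;> subst_vars <;> simp_all <;> omega
    have hA2 : evens f₂ \ evens g = (evens f \ evens g).erase u := by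
      ext w
      simp only [Finset.mem_sdiff, Finset.mem_erase, hmem w]
      constructor
      · rintro ⟨hv' | ⟨hwu, hwf⟩, hwg⟩
        · exact absurd (hv' ▸ hv.1) hwg
        · exact ⟨hwu, hwf, hwg⟩
      · rintro ⟨hwu, hwf, hwg⟩
        exact ⟨Or.inr ⟨hwu, hwf⟩, hwg⟩
    have hcard2 : (evens f₂ \ evens g).card = k := by
      rw [hA2, Finset.card_erase_of_mem (Finset.mem_sdiff.mpr hu), hcard]; omega
    obtain ⟨τ, hτ1, hτ2⟩ := ih σ₂ f₂ hf₂lab hcard2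
    exact ⟨τ, Relation.ReflTransGen.head hstep hτ1, hτ2⟩

/-- given a parity signed graph `(G,σ)`, a signed graph `(G,σ')` is
parity signed iff it can be obtained from `(G,σ)` by a finite sequence of
parity-switches (as signed graphs, i.e. agreeing on all edges). -/
theorem stmt2 [Fintype V] [DecidableEq V] (G : SimpleGraph V) (σ σ' : V → V → ℤ)
    (h : IsParitySigned G σ) :
    IsParitySigned G σ' ↔
      ∃ τ : V → V → ℤ, Relation.ReflTransGen (ParitySwitchStep G) σ τ ∧
        ∀ a b : V, G.Adj a b → τ a b = σ' a b := by
  constructor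
  · rintro ⟨g, hg⟩
    obtain ⟨f, hf⟩ := h
    exact reach G σ' g hg _ σ f hf rfl
  · rintro ⟨τ, hτ, hagree⟩
    have hτps : IsParitySigned G τ := by
      induction hτ with
      | refl => exact h
      | tail _ hstep ih =>
        obtain ⟨f, hf, u, v, hu, hv, rfl⟩ := hstep
        exact ⟨_, swap_labeling G _ f hf u v hu hv⟩
    obtain ⟨f, hf⟩ := hτps
    exact ⟨f, fun a b hab => by rw [← hagree a b hab]; exact hf a b hab⟩

end PSG
end

section
/- Let S=(G,σ) be a degree-balanced parity signed graph on n vertices with G finite, simple and connected, where n is even. Then G is the star K_{1,n−1} or the complete graph K_n. -/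
open scoped Classical

variable {V : Type*}

namespace PSG

section Aux

variable [Fintype V] [DecidableEq V] (G : SimpleGraph V) [DecidableRel G.Adj]

lemma dneg_of_mem {A : Finset V} {u : V} (hu : u ∈ A) :
    dneg G A u = ((Aᶜ : Finset V).filter (fun w => G.Adj u w)).card := by
  unfold dneg
  congr 1
  ext w
  simp only [Finset.mem_filter, Finset.mem_univ, true_and, Finset.mem_compl, hu]
  tauto

lemma dneg_of_notMem {A : Finset V} {u : V} (hu : u ∉ A) :
    dneg G A u = (A.filter (fun w => G.Adj u w)).card := by
  unfold dneg
  congr 1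
  ext w
  simp only [Finset.mem_filter, Finset.mem_univ, true_and, hu]
  tauto

lemma dpos_of_mem {A : Finset V} {u : V} (hu : u ∈ A) :
    dpos G A u = (A.filter (fun w => G.Adj u w)).card := by
  unfold dpos
  congr 1
  ext w
  simp only [Finset.mem_filter, Finset.mem_univ, true_and, hu]
  tauto

lemma dpos_of_notMem {A : Finset V} {u : V} (hu : u ∉ A) :
    dpos G A u = ((Aᶜ : Finset V).filter (fun w => G.Adj u w)).card := by
  unfold dpos
  congr 1
  ext w
  simp only [Finset.mem_filter, Finset.mem_univ, true_and, Finset.mem_compl, hu]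
  tauto

lemma dDelta_compl (A : Finset V) (v : V) : dDelta G (Aᶜ) v = dDelta G A v := by
  have h1 : dneg G (Aᶜ) v = dneg G A v := by
    unfold dneg
    congr 1
    ext w
    simp only [Finset.mem_filter, Finset.mem_univ, true_and, Finset.mem_compl]
    tauto
  have h2 : dpos G (Aᶜ) v = dpos G A v := by
    unfold dpos
    congr 1
    ext w
    simp only [Finset.mem_filter, Finset.mem_univ, true_and, Finset.mem_compl]
    tauto
  unfold dDelta
  rw [h1, h2]

lemma exists_cross (hconn : G.Connected) {A : Finset V} (hA : A.Nonempty)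
    (hAc : (Aᶜ : Finset V).Nonempty) : ∃ u ∈ A, ∃ v ∈ (Aᶜ : Finset V), G.Adj u v := by
  obtain ⟨x, hx⟩ := hA
  obtain ⟨y, hy⟩ := hAc
  obtain ⟨p⟩ := hconn.preconnected x y
  obtain ⟨d, _, hd1, hd2⟩ := p.exists_boundary_dart (A : Set V)
    (by simpa using hx) (by simpa using (Finset.mem_compl.mp hy))
  exact ⟨d.fst, by simpa using hd1, d.snd, Finset.mem_compl.mpr (by simpa using hd2), d.adj⟩

lemma exists_adj (hconn : G.Connected) {x y : V} (hxy : x ≠ y) : ∃ w, G.Adj x w := by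
  obtain ⟨p⟩ := hconn.preconnected x y
  cases p with
  | nil => exact absurd rfl hxy
  | cons h _ => exact ⟨_, h⟩

lemma star_case (hconn : G.Connected)
    (A : Finset V) (hcard : A.card = (Aᶜ : Finset V).card)
    (hdb : ∀ u ∈ A, ∀ v ∈ (Aᶜ : Finset V),
      dDelta G A u + dDelta G A v = if G.Adj u v then 2 else 0)
    (u₀ : V) (hu₀ : u₀ ∈ A) (hiso : ∀ v ∈ (Aᶜ : Finset V), ¬ G.Adj u₀ v) :
    IsStar G := by
  classical
  set k := A.card with hk
  have hsum : A.card + (Aᶜ : Finset V).card = Fintype.card V := by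
    simp [Finset.card_add_card_compl]
  have hVpos : 0 < Fintype.card V := Fintype.card_pos_iff.mpr hconn.nonempty
  have hk1 : 1 ≤ k := by omega
  have hAne : A.Nonempty := Finset.card_pos.mp (by omega)
  have hCne : (Aᶜ : Finset V).Nonempty := Finset.card_pos.mp (by omega)
  set a := dDelta G A u₀ with ha
  -- all vertices of Aᶜ have sign-difference -a
  have hDv : ∀ v ∈ (Aᶜ : Finset V), dDelta G A v = -a := by
    intro v hv
    have h := hdb u₀ hu₀ v hv
    rw [if_neg (hiso v hv)] at h
    linarith
  -- dichotomy on A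
  have hdich : ∀ u ∈ A, (dDelta G A u = a ∧ ∀ v ∈ (Aᶜ : Finset V), ¬ G.Adj u v) ∨
      (dDelta G A u = a + 2 ∧ ∀ v ∈ (Aᶜ : Finset V), G.Adj u v) := by
    intro u hu
    obtain ⟨v₁, hv₁⟩ := hCne
    have key : ∀ v ∈ (Aᶜ : Finset V), dDelta G A u - a = if G.Adj u v then 2 else 0 := by
      intro v hv
      have h := hdb u hu v hv
      rw [hDv v hv] at h
      linarith
    by_cases hadj : G.Adj u v₁
    · right
      have hDu : dDelta G A u = a + 2 := by
        have h := key v₁ hv₁; rw [if_pos hadj] at h; linarith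
      refine ⟨hDu, fun v hv => ?_⟩
      by_contra hn
      have h := key v hv
      rw [hDu, if_neg hn] at h
      omega
    · left
      have hDu : dDelta G A u = a := by
        have h := key v₁ hv₁; rw [if_neg hadj] at h; linarith
      refine ⟨hDu, fun v hv hn => ?_⟩
      have h := key v hv
      rw [hDu, if_pos hn] at h
      omega
  set B := A.filter (fun u => dDelta G A u = a + 2) with hB
  have hBadjC : ∀ c ∈ B, ∀ v ∈ (Aᶜ : Finset V), G.Adj c v := by
    intro c hc v hv
    obtain ⟨hcA, hc2⟩ := Finset.mem_filter.mp hc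
    rcases hdich c hcA with ⟨h1, _⟩ | ⟨_, h2⟩
    · omega
    · exact h2 v hv
  have hnotB : ∀ u ∈ A, u ∉ B → ∀ v ∈ (Aᶜ : Finset V), ¬ G.Adj u v := by
    intro u hu hn
    rcases hdich u hu with ⟨_, h⟩ | ⟨h, _⟩
    · exact h
    · exact absurd (Finset.mem_filter.mpr ⟨hu, h⟩) hn
  -- dpos of vertices in B
  have hposB : ∀ c ∈ B, ((dpos G A c : ℤ)) = (k : ℤ) - a - 2 := by
    intro c hc
    obtain ⟨hcA, hc2⟩ := Finset.mem_filter.mp hc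
    have hfull : ((Aᶜ : Finset V).filter (fun w => G.Adj c w)) = (Aᶜ : Finset V) :=
      Finset.filter_true_of_mem (fun v hv => hBadjC c hc v hv)
    have hnegc : dneg G A c = k := by
      rw [dneg_of_mem G hcA, hfull, ← hcard]
    have h := hc2
    unfold dDelta at h
    rw [hnegc] at h
    linarith
  have hBne : B.Nonempty := by
    obtain ⟨u, hu, v, hv, hadj⟩ := exists_cross G hconn hAne hCne
    refine ⟨u, ?_⟩
    by_contra hn
    exact hnotB u hu hn v hv hadj
  have hage : -1 ≤ a := by
    obtain ⟨c, hc⟩ := hBne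
    obtain ⟨hcA, _⟩ := Finset.mem_filter.mp hc
    have hposc := hposB c hc
    have hdposc : dpos G A c = (A.filter (fun w => G.Adj c w)).card := dpos_of_mem G hcA
    have hsub : A.filter (fun w => G.Adj c w) ⊆ A.erase c := by
      intro w hw
      obtain ⟨hwA, hwadj⟩ := Finset.mem_filter.mp hw
      exact Finset.mem_erase.mpr ⟨(G.ne_of_adj hwadj).symm, hwA⟩
    have hle : (A.filter (fun w => G.Adj c w)).card ≤ (A.erase c).card :=
      Finset.card_le_card hsub
    rw [Finset.card_erase_of_mem hcA] at hle
    omega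
  have hu₀notB : u₀ ∉ B := by
    intro hc
    obtain ⟨v₁, hv₁⟩ := hCne
    exact hiso v₁ hv₁ (hBadjC u₀ hc v₁ hv₁)
  have hoffB : ∀ u ∈ A, u ∉ B → dneg G A u = 0 ∧ ((dpos G A u : ℤ)) = -a := by
    intro u hu hn
    have hempty : ((Aᶜ : Finset V).filter (fun w => G.Adj u w)) = ∅ :=
      Finset.filter_false_of_mem (fun v hv => hnotB u hu hn v hv)
    have hnegu : dneg G A u = 0 := by
      rw [dneg_of_mem G hu, hempty, Finset.card_empty]
    have hDu : dDelta G A u = a := by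
      rcases hdich u hu with ⟨h, _⟩ | ⟨h, _⟩
      · exact h
      · exact absurd (Finset.mem_filter.mpr ⟨hu, h⟩) hn
    refine ⟨hnegu, ?_⟩
    unfold dDelta at hDu
    rw [hnegu] at hDu
    push_cast at hDu ⊢
    linarith
  have hale : a ≤ 0 := by
    obtain ⟨_, h⟩ := hoffB u₀ hu₀ hu₀notB
    have h0 : (0 : ℤ) ≤ (dpos G A u₀ : ℤ) := Int.natCast_nonneg _
    linarith
  have hAfilter : ∀ v ∈ (Aᶜ : Finset V), A.filter (fun w => G.Adj v w) = B := by
    intro v hv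
    ext w
    simp only [Finset.mem_filter]
    constructor
    · rintro ⟨hwA, hadj⟩
      by_contra hn
      exact hnotB w hwA hn v hv hadj.symm
    · intro hwB
      have hwA : w ∈ A := (Finset.mem_filter.mp hwB).1
      exact ⟨hwA, (hBadjC w hwB v hv).symm⟩
  have hposC : ∀ v ∈ (Aᶜ : Finset V),
      (((Aᶜ : Finset V).filter (fun w => G.Adj v w)).card : ℤ) = (B.card : ℤ) + a := by
    intro v hv
    have hvnA : v ∉ A := Finset.mem_compl.mp hv
    have hnegv : dneg G A v = B.card := by
      rw [dneg_of_notMem G hvnA, hAfilter v hv]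
    have hDvv := hDv v hv
    unfold dDelta at hDvv
    rw [hnegv, dpos_of_notMem G hvnA] at hDvv
    linarith
  have hane : a ≠ 0 := by
    intro ha0
    obtain ⟨hneg0, hpos0⟩ := hoffB u₀ hu₀ hu₀notB
    obtain ⟨v₁, hv₁⟩ := hCne
    have hne : u₀ ≠ v₁ := by
      intro h; rw [h] at hu₀; exact (Finset.mem_compl.mp hv₁) hu₀
    obtain ⟨w, hw⟩ := exists_adj G hconn hne
    by_cases hwA : w ∈ A
    · have hmem : w ∈ A.filter (fun x => G.Adj u₀ x) := Finset.mem_filter.mpr ⟨hwA, hw⟩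
      have hdp := dpos_of_mem (A := A) G hu₀
      have hc0 : (A.filter (fun x => G.Adj u₀ x)).card = 0 := by omega
      rw [Finset.card_eq_zero] at hc0
      rw [hc0] at hmem
      exact absurd hmem (Finset.notMem_empty w)
    · exact hnotB u₀ hu₀ hu₀notB w (Finset.mem_compl.mpr hwA) hw
  have ham1 : a = -1 := by omega
  -- now each vertex of B is adjacent to all other vertices of A
  have herase : ∀ c ∈ B, A.filter (fun w => G.Adj c w) = A.erase c := by
    intro c hc
    have hcA : c ∈ A := (Finset.mem_filter.mp hc).1
    have hposc := hposB c hc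
    have hsub : A.filter (fun w => G.Adj c w) ⊆ A.erase c := by
      intro w hw
      obtain ⟨hwA, hwadj⟩ := Finset.mem_filter.mp hw
      exact Finset.mem_erase.mpr ⟨(G.ne_of_adj hwadj).symm, hwA⟩
    have hdposc : dpos G A c = (A.filter (fun w => G.Adj c w)).card := dpos_of_mem G hcA
    apply Finset.eq_of_subset_of_card_le hsub
    rw [Finset.card_erase_of_mem hcA, ← hdposc]
    omega
  have hB1 : B.card = 1 := by
    have hsubB : B ⊆ A.filter (fun w => G.Adj u₀ w) := by
      intro c hc
      have hcA : c ∈ A := (Finset.mem_filter.mp hc).1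
      have hu₀c : u₀ ≠ c := by intro h; rw [h] at hu₀notB; exact hu₀notB hc
      have hmem : u₀ ∈ A.erase c := Finset.mem_erase.mpr ⟨hu₀c, hu₀⟩
      rw [← herase c hc] at hmem
      exact Finset.mem_filter.mpr ⟨hcA, (Finset.mem_filter.mp hmem).2.symm⟩
    have hcardle : B.card ≤ (A.filter (fun w => G.Adj u₀ w)).card :=
      Finset.card_le_card hsubB
    have hdpos : dpos G A u₀ = (A.filter (fun w => G.Adj u₀ w)).card := dpos_of_mem G hu₀
    obtain ⟨_, hpos⟩ := hoffB u₀ hu₀ hu₀notB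
    have h2 : 1 ≤ B.card := Finset.card_pos.mpr hBne
    omega
  obtain ⟨c, hBc⟩ := Finset.card_eq_one.mp hB1
  have hcB : c ∈ B := by rw [hBc]; exact Finset.mem_singleton_self c
  have hcA : c ∈ A := (Finset.mem_filter.mp hcB).1
  have hcerase := herase c hcB
  have hcadj : ∀ y : V, y ≠ c → G.Adj c y := by
    intro y hy
    by_cases hyA : y ∈ A
    · have hmem : y ∈ A.erase c := Finset.mem_erase.mpr ⟨hy, hyA⟩
      rw [← hcerase] at hmem
      exact (Finset.mem_filter.mp hmem).2
    · exact hBadjC c hcB y (Finset.mem_compl.mpr hyA)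
  refine ⟨c, fun x y => ?_⟩
  constructor
  · intro hadj
    by_cases hx : x = c
    · refine Or.inl ⟨hx, fun h => ?_⟩
      exact G.ne_of_adj hadj (hx.trans h.symm)
    · by_cases hy : y = c
      · exact Or.inr ⟨hy, hx⟩
      · exfalso
        by_cases hxA : x ∈ A
        · have hxB : x ∉ B := by
            rw [hBc]; simp only [Finset.mem_singleton]; exact hx
          by_cases hyA : y ∈ A
          · obtain ⟨_, hpos⟩ := hoffB x hxA hxB
            have hdpos : dpos G A x = (A.filter (fun w => G.Adj x w)).card :=
              dpos_of_mem G hxA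
            have h1 : (A.filter (fun w => G.Adj x w)).card = 1 := by omega
            obtain ⟨z, hz⟩ := Finset.card_eq_one.mp h1
            have hcz : c ∈ A.filter (fun w => G.Adj x w) :=
              Finset.mem_filter.mpr ⟨hcA, (hcadj x hx).symm⟩
            have hyz : y ∈ A.filter (fun w => G.Adj x w) :=
              Finset.mem_filter.mpr ⟨hyA, hadj⟩
            rw [hz, Finset.mem_singleton] at hcz hyz
            exact hy (hyz.trans hcz.symm)
          · exact hnotB x hxA hxB y (Finset.mem_compl.mpr hyA) hadj
        · have hxC : x ∈ (Aᶜ : Finset V) := Finset.mem_compl.mpr hxA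
          by_cases hyA : y ∈ A
          · have hmem : y ∈ A.filter (fun w => G.Adj x w) := Finset.mem_filter.mpr ⟨hyA, hadj⟩
            rw [hAfilter x hxC, hBc, Finset.mem_singleton] at hmem
            exact hy hmem
          · have hyC : y ∈ (Aᶜ : Finset V) := Finset.mem_compl.mpr hyA
            have h0 := hposC x hxC
            have hc0 : ((Aᶜ : Finset V).filter (fun w => G.Adj x w)).card = 0 := by omega
            rw [Finset.card_eq_zero] at hc0
            have hmem : y ∈ ((Aᶜ : Finset V).filter (fun w => G.Adj x w)) :=
              Finset.mem_filter.mpr ⟨hyC, hadj⟩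
            rw [hc0] at hmem
            exact absurd hmem (Finset.notMem_empty y)
  · rintro (⟨rfl, hy⟩ | ⟨rfl, hx⟩)
    · exact hcadj y hy
    · exact (hcadj x hx).symm

lemma complete_case (hconn : G.Connected)
    (A : Finset V) (hcard : A.card = (Aᶜ : Finset V).card)
    (hdb : ∀ u ∈ A, ∀ v ∈ (Aᶜ : Finset V),
      dDelta G A u + dDelta G A v = if G.Adj u v then 2 else 0)
    (hall : ∀ u ∈ A, ∀ v ∈ (Aᶜ : Finset V), G.Adj u v) : G = ⊤ := by
  classical
  set k := A.card with hk
  have hsum : A.card + (Aᶜ : Finset V).card = Fintype.card V := by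
    simp [Finset.card_add_card_compl]
  have hVpos : 0 < Fintype.card V := Fintype.card_pos_iff.mpr hconn.nonempty
  have hk1 : 1 ≤ k := by omega
  have hAne : A.Nonempty := Finset.card_pos.mp (by omega)
  have hCne : (Aᶜ : Finset V).Nonempty := Finset.card_pos.mp (by omega)
  obtain ⟨u₁, hu₁⟩ := hAne
  obtain ⟨v₁, hv₁⟩ := hCne
  set α := dDelta G A u₁ with hα
  have h2 : ∀ u ∈ A, ∀ v ∈ (Aᶜ : Finset V), dDelta G A u + dDelta G A v = 2 := by
    intro u hu v hv
    have h := hdb u hu v hv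
    rw [if_pos (hall u hu v hv)] at h
    exact h
  have hDu : ∀ u ∈ A, dDelta G A u = α := by
    intro u hu
    have h1 := h2 u hu v₁ hv₁
    have hb := h2 u₁ hu₁ v₁ hv₁
    linarith
  have hDvv : ∀ v ∈ (Aᶜ : Finset V), dDelta G A v = 2 - α := by
    intro v hv
    have h1 := h2 u₁ hu₁ v hv
    linarith
  have hsubA : ∀ u ∈ A, A.filter (fun w => G.Adj u w) ⊆ A.erase u := by
    intro u hu w hw
    obtain ⟨hwA, hwadj⟩ := Finset.mem_filter.mp hw
    exact Finset.mem_erase.mpr ⟨(G.ne_of_adj hwadj).symm, hwA⟩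
  have hsubC : ∀ v ∈ (Aᶜ : Finset V),
      (Aᶜ : Finset V).filter (fun w => G.Adj v w) ⊆ (Aᶜ : Finset V).erase v := by
    intro v hv w hw
    obtain ⟨hwC, hwadj⟩ := Finset.mem_filter.mp hw
    exact Finset.mem_erase.mpr ⟨(G.ne_of_adj hwadj).symm, hwC⟩
  have hposA : ∀ u ∈ A, ((A.filter (fun w => G.Adj u w)).card : ℤ) = (k : ℤ) - α := by
    intro u hu
    have hDuu := hDu u hu
    unfold dDelta at hDuu
    rw [dneg_of_mem G hu, Finset.filter_true_of_mem (fun v hv => hall u hu v hv), ← hcard,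
      dpos_of_mem G hu] at hDuu
    linarith
  have hposC : ∀ v ∈ (Aᶜ : Finset V),
      (((Aᶜ : Finset V).filter (fun w => G.Adj v w)).card : ℤ) = (k : ℤ) - (2 - α) := by
    intro v hv
    have hDvv2 := hDvv v hv
    have hvnA : v ∉ A := Finset.mem_compl.mp hv
    unfold dDelta at hDvv2
    rw [dneg_of_notMem G hvnA,
      Finset.filter_true_of_mem (fun u hu => (hall u hu v hv).symm),
      dpos_of_notMem G hvnA] at hDvv2
    linarith
  have hα1 : α = 1 := by
    have h1 := hposA u₁ hu₁
    have hle1 : (A.filter (fun w => G.Adj u₁ w)).card ≤ (A.erase u₁).card :=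
      Finset.card_le_card (hsubA u₁ hu₁)
    rw [Finset.card_erase_of_mem hu₁] at hle1
    have h2' := hposC v₁ hv₁
    have hle2 : ((Aᶜ : Finset V).filter (fun w => G.Adj v₁ w)).card ≤
        ((Aᶜ : Finset V).erase v₁).card := Finset.card_le_card (hsubC v₁ hv₁)
    rw [Finset.card_erase_of_mem hv₁, ← hcard] at hle2
    omega
  have hfullA : ∀ u ∈ A, A.filter (fun w => G.Adj u w) = A.erase u := by
    intro u hu
    apply Finset.eq_of_subset_of_card_le (hsubA u hu)
    have h1 := hposA u hu
    rw [hα1] at h1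
    rw [Finset.card_erase_of_mem hu]
    omega
  have hfullC : ∀ v ∈ (Aᶜ : Finset V),
      (Aᶜ : Finset V).filter (fun w => G.Adj v w) = (Aᶜ : Finset V).erase v := by
    intro v hv
    apply Finset.eq_of_subset_of_card_le (hsubC v hv)
    have h1 := hposC v hv
    rw [hα1] at h1
    rw [Finset.card_erase_of_mem hv, ← hcard]
    omega
  ext x y
  simp only [SimpleGraph.top_adj]
  constructor
  · exact fun h => G.ne_of_adj h
  · intro hxy
    by_cases hxA : x ∈ A
    · by_cases hyA : y ∈ A
      · have hmem : y ∈ A.erase x := Finset.mem_erase.mpr ⟨Ne.symm hxy, hyA⟩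
        rw [← hfullA x hxA] at hmem
        exact (Finset.mem_filter.mp hmem).2
      · exact hall x hxA y (Finset.mem_compl.mpr hyA)
    · by_cases hyA : y ∈ A
      · exact (hall y hyA x (Finset.mem_compl.mpr hxA)).symm
      · have hmem : y ∈ (Aᶜ : Finset V).erase x :=
          Finset.mem_erase.mpr ⟨Ne.symm hxy, Finset.mem_compl.mpr hyA⟩
        rw [← hfullC x (Finset.mem_compl.mpr hxA)] at hmem
        exact (Finset.mem_filter.mp hmem).2

end Aux

/-- a degree-balanced parity signed graph on an even number of
vertices, with connected underlying graph, is a star or complete. -/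
theorem stmt4 [Fintype V] [DecidableEq V] (G : SimpleGraph V) [DecidableRel G.Adj]
    (hconn : G.Connected) (heven : Even (Fintype.card V))
    (A : Finset V) (hA : Balanced A)
    (hdb : ∀ u ∈ A, ∀ v ∈ (Aᶜ : Finset V),
      dDelta G A u + dDelta G A v = if G.Adj u v then 2 else 0) :
    IsStar G ∨ G = ⊤ := by
  classical
  -- the two sides have equal size
  have hsum : A.card + (Aᶜ : Finset V).card = Fintype.card V := by
    simp [Finset.card_add_card_compl]
  have hcard : A.card = (Aᶜ : Finset V).card := by
    unfold Balanced at hA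
    rw [abs_le] at hA
    obtain ⟨m, hm⟩ := heven
    omega
  by_cases hall : ∀ u ∈ A, ∀ v ∈ (Aᶜ : Finset V), G.Adj u v
  · exact Or.inr (complete_case G hconn A hcard hdb hall)
  · left
    push_neg at hall
    obtain ⟨u₀, hu₀, v₀, hv₀, hna⟩ := hall
    -- key identity from the four degree-balance equations
    have key : ∀ u ∈ A, ∀ v ∈ (Aᶜ : Finset V),
        (if G.Adj u v then (2 : ℤ) else 0) =
          (if G.Adj u v₀ then 2 else 0) + (if G.Adj u₀ v then 2 else 0) := by
      intro u hu v hv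
      have h1 := hdb u hu v hv
      have h2 := hdb u hu v₀ hv₀
      have h3 := hdb u₀ hu₀ v hv
      have h4 := hdb u₀ hu₀ v₀ hv₀
      rw [if_neg hna] at h4
      linarith
    -- the degree-balance condition for the complement partition
    have hdbC : ∀ u ∈ (Aᶜ : Finset V), ∀ v ∈ ((Aᶜ : Finset V)ᶜ : Finset V),
        dDelta G (Aᶜ) u + dDelta G (Aᶜ) v = if G.Adj u v then 2 else 0 := by
      intro u hu v hv
      rw [compl_compl] at hv
      rw [dDelta_compl, dDelta_compl]
      have h := hdb v hv u hu
      by_cases hadj : G.Adj u v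
      · rw [if_pos hadj]
        rw [if_pos hadj.symm] at h
        linarith
      · rw [if_neg hadj]
        rw [if_neg (fun hh => hadj hh.symm)] at h
        linarith
    by_cases hc : ∃ v ∈ (Aᶜ : Finset V), G.Adj u₀ v
    · obtain ⟨v₁, hv₁, hadj₁⟩ := hc
      have hisoC : ∀ u ∈ A, ¬ G.Adj u v₀ := by
        intro u hu hadj
        have h := key u hu v₁ hv₁
        rw [if_pos hadj, if_pos hadj₁] at h
        split_ifs at h <;> omega
      have hisoC' : ∀ u ∈ (((Aᶜ : Finset V))ᶜ : Finset V), ¬ G.Adj v₀ u := by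
        intro u hu
        rw [compl_compl] at hu
        rw [G.adj_comm]
        exact hisoC u hu
      have hcard' : (Aᶜ : Finset V).card = (((Aᶜ : Finset V))ᶜ : Finset V).card := by
        rw [compl_compl]
        exact hcard.symm
      exact star_case G hconn (Aᶜ) hcard' hdbC v₀ hv₀ hisoC'
    · push_neg at hc
      exact star_case G hconn A hcard hdb u₀ hu₀ hc


end PSG
end

section
/- Let G be a finite, simple, connected graph on n vertices. Then Σ⁻(G) is a singleton (i.e., every parity signature of G has the same number of negative edges) if and only if G is K_{1,n−1} with n even, or G is K_n. -/
/-!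
Adding a vertex `x ∉ S` to `S` changes the cut by `deg x - 2 d_S(x)`, where `d_S(x)` counts the
neighbours of `x` in `S`. Suppose all parity-partitions cut the same number of edges. For `n` odd,
taking `|S| = (n - 1) / 2` forces `deg x = 2 d_S(x)`; exchanging one vertex `s ∈ S` for `t ∉ S`
then shows that `x` is adjacent to `s` iff it is adjacent to `t`, so a connected `G` is complete.
For `n` even, taking `|S| = n / 2 - 1` makes `deg x - 2 d_S(x)` independent of `x ∉ S`, and the
same exchange gives `a(x,s) + a(y,t) = a(x,t) + a(y,s)` for distinct `x, y, s, t`; a connected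
graph with this property is complete or a star. Conversely, for every parity-partition a star
on an even number of vertices cuts `n / 2` edges and `K_n` cuts `⌊n/2⌋ ⌈n/2⌉`.
-/

open scoped Classical

variable {V : Type*}

namespace PSG

open Finset SimpleGraph

lemma sum_insert_erase_add {α M : Type*} [DecidableEq α] [AddCommMonoid M] {S : Finset α}
    {s t : α} (hs : s ∈ S) (ht : t ∉ S) (f : α → M) :
    ∑ y ∈ insert t (S.erase s), f y + f s = ∑ y ∈ S, f y + f t := by
  rw [sum_insert (fun h => ht (mem_of_mem_erase h)), add_comm (f t), add_right_comm,
    sum_erase_add _ _ hs]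

lemma card_insert_erase {α : Type*} [DecidableEq α] {S : Finset α} {s t : α} (hs : s ∈ S)
    (ht : t ∉ S) : #(insert t (S.erase s)) = #S := by
  rw [card_insert_of_notMem (fun h => ht (mem_of_mem_erase h)), card_erase_add_one hs]

lemma degree_eq_sum_adjMatrix [Fintype V] (G : SimpleGraph V) [DecidableRel G.Adj] (x : V) :
    G.degree x = ∑ b, G.adjMatrix ℕ x b := by
  simp [← card_neighborFinset_eq_degree, neighborFinset_eq_filter]

section

variable [Fintype V] [DecidableEq V]

lemma balanced_iff {A : Finset V} :
    Balanced A ↔ #A = Fintype.card V / 2 ∨ #A = (Fintype.card V + 1) / 2 := by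
  have := card_le_univ A
  rw [Balanced, card_compl, abs_le]
  omega

lemma exists_balanced : ∃ A : Finset V, Balanced A := by
  obtain ⟨A, -, hA⟩ := exists_subset_card_eq (s := (univ : Finset V))
    (n := Fintype.card V / 2) (by rw [card_univ]; omega)
  exact ⟨A, balanced_iff.mpr (Or.inl hA)⟩

lemma exists_mem_disjoint_card_eq {s : V} {T : Finset V} {k : ℕ} (hs : s ∉ T) (hk : 1 ≤ k)
    (hkT : k + #T ≤ Fintype.card V) : ∃ S : Finset V, s ∈ S ∧ Disjoint S T ∧ #S = k := by
  obtain ⟨S, hsS, hST, hS⟩ := exists_subsuperset_card_eq (singleton_subset_iff.mpr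
    (mem_compl.mpr hs)) (by simpa using hk) (by rw [card_compl]; omega)
  exact ⟨S, singleton_subset_iff.mp hsS, subset_compl_iff_disjoint_right.mp hST, hS⟩

variable (G : SimpleGraph V) [DecidableRel G.Adj]

lemma sigmaSet_nonempty : (sigmaSet G).Nonempty :=
  let ⟨A, hA⟩ := exists_balanced (V := V)
  ⟨cut G A, A, hA, rfl⟩

lemma cut_eq_sum_adjMatrix (A : Finset V) :
    cut G A = ∑ a ∈ A, ∑ b ∈ Aᶜ, G.adjMatrix ℕ a b := by
  rw [cut, card_filter, sum_product]
  rfl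

lemma cut_insert_add {x : V} {S : Finset V} (hx : x ∉ S) :
    cut G (insert x S) + 2 * ∑ y ∈ S, G.adjMatrix ℕ x y = cut G S + G.degree x := by
  have hxc : x ∈ Sᶜ := mem_compl.mpr hx
  have hrow : ∀ a, ∑ b ∈ Sᶜ.erase x, G.adjMatrix ℕ a b + G.adjMatrix ℕ a x =
      ∑ b ∈ Sᶜ, G.adjMatrix ℕ a b := fun a => sum_erase_add _ _ hxc
  have hxx : ∑ b ∈ Sᶜ.erase x, G.adjMatrix ℕ x b = ∑ b ∈ Sᶜ, G.adjMatrix ℕ x b :=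
    sum_erase _ (by simp)
  have hcol : ∑ a ∈ S, G.adjMatrix ℕ a x = ∑ y ∈ S, G.adjMatrix ℕ x y :=
    sum_congr rfl fun a _ => G.isSymm_adjMatrix.apply x a
  have hdeg :
      ∑ y ∈ S, G.adjMatrix ℕ x y + ∑ b ∈ Sᶜ, G.adjMatrix ℕ x b = G.degree x := by
    rw [sum_add_sum_compl, degree_eq_sum_adjMatrix]
  rw [cut_eq_sum_adjMatrix, cut_eq_sum_adjMatrix, compl_insert, sum_insert hx, hxx, ← hdeg,
    ← hcol, ← sum_congr rfl fun a _ => hrow a, sum_add_distrib]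
  ring

lemma cut_eq_ite_of_star_center {c : V}
    (hc : ∀ a b, G.Adj a b ↔ (a = c ∧ b ≠ c) ∨ (b = c ∧ a ≠ c)) (A : Finset V) :
    cut G A = if c ∈ A then #Aᶜ else #A := by
  rw [cut_eq_sum_adjMatrix]
  split_ifs with hcA
  · rw [sum_eq_single_of_mem c hcA]
    · rw [card_eq_sum_ones]
      refine sum_congr rfl fun b hb => ?_
      simp [hc, (ne_of_mem_of_not_mem hcA (mem_compl.mp hb)).symm]
    · intro a _ hac
      simp [hc, hac, hcA]
  · rw [card_eq_sum_ones]
    refine sum_congr rfl fun a ha => ?_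
    rw [sum_eq_single_of_mem c (mem_compl.mpr hcA)]
    · simp [hc, ne_of_mem_of_not_mem ha hcA]
    · intro b hb hbc
      simp [hc, hbc, ne_of_mem_of_not_mem ha hcA]

lemma cut_top [DecidableRel (⊤ : SimpleGraph V).Adj] (A : Finset V) :
    cut ⊤ A = #A * #Aᶜ := by
  rw [cut_eq_sum_adjMatrix, ← smul_eq_mul, ← sum_const]
  refine sum_congr rfl fun a ha => ?_
  rw [card_eq_sum_ones]
  refine sum_congr rfl fun b hb => ?_
  simp [ne_of_mem_of_not_mem ha (mem_compl.mp hb)]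

lemma sigmaSet_subsingleton_of_isStar (hG : IsStar G) (heven : Even (Fintype.card V)) :
    (sigmaSet G).Subsingleton := by
  obtain ⟨c, hc⟩ := hG
  obtain ⟨r, hr⟩ := heven
  have hcard : ∀ A : Finset V, Balanced A → #A = r ∧ #Aᶜ = r := fun A hA => by
    rw [card_compl]; rcases balanced_iff.mp hA with h | h <;> omega
  rintro _ ⟨A, hA, rfl⟩ _ ⟨B, hB, rfl⟩
  rw [cut_eq_ite_of_star_center G hc, cut_eq_ite_of_star_center G hc]
  have := hcard A hA
  have := hcard B hB
  split_ifs <;> omega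

lemma sigmaSet_top_subsingleton [DecidableRel (⊤ : SimpleGraph V).Adj] :
    (sigmaSet (⊤ : SimpleGraph V)).Subsingleton := by
  have key : ∀ A : Finset V, Balanced A →
      cut ⊤ A = Fintype.card V / 2 * ((Fintype.card V + 1) / 2) := fun A hA => by
    rw [cut_top, card_compl]
    rcases balanced_iff.mp hA with h | h <;> rw [h]
    · rw [show Fintype.card V - Fintype.card V / 2 = (Fintype.card V + 1) / 2 by omega]
    · rw [show Fintype.card V - (Fintype.card V + 1) / 2 = Fintype.card V / 2 by omega, mul_comm]
  rintro _ ⟨A, hA, rfl⟩ _ ⟨B, hB, rfl⟩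
  rw [key A hA, key B hB]

variable {G}

lemma degree_add_two_mul_sum_eq (h : (sigmaSet G).Subsingleton) {x y : V} {S : Finset V}
    (hx : x ∉ S) (hy : y ∉ S) (hxS : Balanced (insert x S)) (hyS : Balanced (insert y S)) :
    G.degree x + 2 * ∑ b ∈ S, G.adjMatrix ℕ y b =
      G.degree y + 2 * ∑ b ∈ S, G.adjMatrix ℕ x b := by
  have := h ⟨_, hxS, rfl⟩ ⟨_, hyS, rfl⟩
  have := cut_insert_add G hx
  have := cut_insert_add G hy
  omega

lemma degree_eq_two_mul_sum (h : (sigmaSet G).Subsingleton) {x : V} {S : Finset V}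
    (hx : x ∉ S) (hS : Balanced S) (hxS : Balanced (insert x S)) :
    G.degree x = 2 * ∑ b ∈ S, G.adjMatrix ℕ x b := by
  have := h ⟨_, hxS, rfl⟩ ⟨_, hS, rfl⟩
  have := cut_insert_add G hx
  omega

lemma adjMatrix_add_eq_of_even (h : (sigmaSet G).Subsingleton) (heven : Even (Fintype.card V))
    {x y s t : V} (hxy : x ≠ y) (hxs : x ≠ s) (hxt : x ≠ t) (hys : y ≠ s) (hyt : y ≠ t)
    (hst : s ≠ t) :
    G.adjMatrix ℕ x s + G.adjMatrix ℕ y t = G.adjMatrix ℕ x t + G.adjMatrix ℕ y s := by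
  have hT : #{x, y, t} = 3 := card_eq_three.mpr ⟨x, y, t, hxy, hxt, hyt, rfl⟩
  have hsT : s ∉ ({x, y, t} : Finset V) := by simp [hxs.symm, hys.symm, hst]
  have hn := card_lt_univ_of_notMem hsT
  obtain ⟨r, hr⟩ := heven
  obtain ⟨S, hsS, hST, hS⟩ := exists_mem_disjoint_card_eq hsT (k := r - 1) (by omega) (by omega)
  have hxS : x ∉ S := disjoint_right.mp hST (by simp)
  have hyS : y ∉ S := disjoint_right.mp hST (by simp)
  have htS : t ∉ S := disjoint_right.mp hST (by simp)
  have hbal : ∀ {z : V} {R : Finset V}, z ∉ R → #R = r - 1 → Balanced (insert z R) :=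
    fun hz hR => balanced_iff.mpr (Or.inl (by rw [card_insert_of_notMem hz]; omega))
  have hS' := card_insert_erase hsS htS
  have hxS' : x ∉ insert t (S.erase s) := by simp [hxt, hxS]
  have hyS' : y ∉ insert t (S.erase s) := by simp [hyt, hyS]
  have e := degree_add_two_mul_sum_eq h hxS hyS (hbal hxS hS) (hbal hyS hS)
  have e' := degree_add_two_mul_sum_eq h hxS' hyS' (hbal hxS' (hS'.trans hS))
    (hbal hyS' (hS'.trans hS))
  have ex := sum_insert_erase_add hsS htS (G.adjMatrix ℕ x)
  have ey := sum_insert_erase_add hsS htS (G.adjMatrix ℕ y)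
  omega

lemma adj_iff_adj_of_odd (h : (sigmaSet G).Subsingleton) (hodd : Odd (Fintype.card V))
    {x s t : V} (hxs : x ≠ s) (hxt : x ≠ t) (hst : s ≠ t) : G.Adj x s ↔ G.Adj x t := by
  have hT : #{x, t} = 2 := card_pair hxt
  have hsT : s ∉ ({x, t} : Finset V) := by simp [hxs.symm, hst]
  have hn := card_lt_univ_of_notMem hsT
  obtain ⟨r, hr⟩ := hodd
  obtain ⟨S, hsS, hST, hS⟩ := exists_mem_disjoint_card_eq hsT (k := r) (by omega) (by omega)
  have hxS : x ∉ S := disjoint_right.mp hST (by simp)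
  have htS : t ∉ S := disjoint_right.mp hST (by simp)
  have hbal : ∀ {z : V} {R : Finset V}, z ∉ R → #R = r →
      Balanced R ∧ Balanced (insert z R) :=
    fun hz hR => ⟨balanced_iff.mpr (Or.inl (by omega)),
      balanced_iff.mpr (Or.inr (by rw [card_insert_of_notMem hz]; omega))⟩
  have hS' := card_insert_erase hsS htS
  have hxS' : x ∉ insert t (S.erase s) := by simp [hxt, hxS]
  have e := degree_eq_two_mul_sum h hxS (hbal hxS hS).1 (hbal hxS hS).2
  have e' := degree_eq_two_mul_sum h hxS' (hbal hxS' (hS'.trans hS)).1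
    (hbal hxS' (hS'.trans hS)).2
  have ex := sum_insert_erase_add hsS htS (G.adjMatrix ℕ x)
  have hst' : G.adjMatrix ℕ x s = G.adjMatrix ℕ x t := by omega
  rw [adjMatrix_apply, adjMatrix_apply] at hst'
  split_ifs at hst' <;> simp_all

end

section

variable {G : SimpleGraph V}

lemma eq_top_of_adj_iff_adj (hG : G.Preconnected)
    (h : ∀ a b c, a ≠ b → a ≠ c → b ≠ c → (G.Adj a b ↔ G.Adj a c)) : G = ⊤ := by
  ext a b
  refine ⟨Adj.ne, fun hab => ?_⟩
  have : Nontrivial V := ⟨⟨a, b, hab⟩⟩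
  obtain ⟨c, hac⟩ := hG.exists_adj_of_nontrivial a
  by_cases hcb : c = b
  · exact hcb ▸ hac
  · exact (h a c b hac.ne hab hcb).mp hac

lemma isStar_of_forall_adj {c : V} (hc : ∀ u, u ≠ c → G.Adj u c)
    (h : ∀ u v, u ≠ c → v ≠ c → ¬ G.Adj u v) : IsStar G := by
  refine ⟨c, fun a b => ⟨fun hab => ?_, ?_⟩⟩
  · by_cases ha : a = c
    · exact Or.inl ⟨ha, ha ▸ hab.ne.symm⟩
    · by_cases hb : b = c
      · exact Or.inr ⟨hb, ha⟩
      · exact absurd hab (h a b ha hb)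
  · rintro (⟨rfl, hb⟩ | ⟨rfl, ha⟩)
    · exact (hc b hb).symm
    · exact hc a ha

variable [DecidableRel G.Adj]

lemma isStar_of_adjMatrix_add_eq (hG : G.Preconnected)
    (hM : ∀ x y s t, x ≠ y → x ≠ s → x ≠ t → y ≠ s → y ≠ t → s ≠ t →
      G.adjMatrix ℕ x s + G.adjMatrix ℕ y t = G.adjMatrix ℕ x t + G.adjMatrix ℕ y s)
    {a b c : V} (hab : a ≠ b) (hac : a ≠ c) (hbc : b ≠ c) (hadj : G.Adj a b)
    (hnadj : ¬ G.Adj a c) : IsStar G := by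
  have hside : ∀ u, u ≠ b → u ≠ c → G.Adj u b ∧ ¬ G.Adj u c := by
    intro u hub huc
    by_cases hua : u = a
    · exact hua ▸ ⟨hadj, hnadj⟩
    have e := hM u a b c hua hub huc hab hac hbc
    simp only [adjMatrix_apply, hadj, hnadj, if_true, if_false] at e
    split_ifs at e <;> simp_all
  have hcb : G.Adj c b := by
    have : Nontrivial V := ⟨⟨b, c, hbc⟩⟩
    obtain ⟨d, hcd⟩ := hG.exists_adj_of_nontrivial c
    by_cases hdb : d = b
    · exact hdb ▸ hcd
    · exact absurd hcd.symm (hside d hdb hcd.ne.symm).2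
  refine isStar_of_forall_adj (c := b) (fun u hub => ?_) (fun u v hub hvb huv => ?_)
  · by_cases huc : u = c
    · exact huc ▸ hcb
    · exact (hside u hub huc).1
  · by_cases huc : u = c
    · exact (hside v hvb (huc ▸ huv.ne.symm)).2 (huc ▸ huv.symm)
    by_cases hvc : v = c
    · exact (hside u hub huc).2 (hvc ▸ huv)
    have e := hM u c v b huc huv.ne hub (Ne.symm hvc) hbc.symm hvb
    simp only [adjMatrix_apply, huv, hcb, (hside u hub huc).1, (hside v hvb hvc).2,
      G.adj_comm c v] at e
    simp at e

lemma isStar_or_eq_top_of_adjMatrix_add_eq (hG : G.Preconnected)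
    (hM : ∀ x y s t, x ≠ y → x ≠ s → x ≠ t → y ≠ s → y ≠ t → s ≠ t →
      G.adjMatrix ℕ x s + G.adjMatrix ℕ y t = G.adjMatrix ℕ x t + G.adjMatrix ℕ y s) :
    IsStar G ∨ G = ⊤ := by
  by_cases h : ∀ a b c, a ≠ b → a ≠ c → b ≠ c → (G.Adj a b ↔ G.Adj a c)
  · exact Or.inr (eq_top_of_adj_iff_adj hG h)
  push Not at h
  obtain ⟨a, b, c, hab, hac, hbc, ⟨hb, hc⟩ | ⟨hb, hc⟩⟩ := h
  · exact Or.inl (isStar_of_adjMatrix_add_eq hG hM hab hac hbc hb hc)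
  · exact Or.inl (isStar_of_adjMatrix_add_eq hG hM hac hab hbc.symm hc hb)

end

/-- `Σ⁻(G)` is a singleton iff `G` is `K_{1,n-1}` with `n` even,
or `G` is complete. -/
theorem stmt6 [Fintype V] [DecidableEq V] (G : SimpleGraph V) [DecidableRel G.Adj]
    (hconn : G.Connected) :
    (∃ k : ℕ, sigmaSet G = {k}) ↔
      ((IsStar G ∧ Even (Fintype.card V)) ∨ G = ⊤) := by
  rw [Set.exists_eq_singleton_iff_nonempty_subsingleton, and_iff_right (sigmaSet_nonempty G)]
  constructor
  · intro h
    rcases Nat.even_or_odd (Fintype.card V) with heven | hodd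
    · exact (isStar_or_eq_top_of_adjMatrix_add_eq hconn.preconnected
        fun _ _ _ _ => adjMatrix_add_eq_of_even h heven).imp_left (⟨·, heven⟩)
    · exact Or.inr (eq_top_of_adj_iff_adj hconn.preconnected
        fun _ _ _ => adj_iff_adj_of_odd h hodd)
  · rintro (⟨hstar, heven⟩ | rfl)
    · exact sigmaSet_subsingleton_of_isStar G hstar heven
    · exact sigmaSet_top_subsingleton

end PSG
end

section
/- For every finite simple connected graph G with m edges and n ≥ 4 vertices, σ⁻(G) ≤ ⌊m/2 + n/4⌋. -/
open scoped Classical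

variable {V : Type*}

namespace PSG

open Finset in
lemma count_pair [Fintype V] [DecidableEq V] (u v : V) (huv : u ≠ v) (k : ℕ) (hk : 1 ≤ k) :
    (((Finset.univ : Finset V).powersetCard k).filter fun A : Finset V => u ∈ A ∧ v ∉ A).card
      = (Fintype.card V - 2).choose (k - 1) := by
  have hmemu : u ∈ (Finset.univ : Finset V).erase v := by simp [huv]
  have hcard2 : (((Finset.univ : Finset V).erase v).erase u).card = Fintype.card V - 2 := by
    rw [card_erase_of_mem hmemu, card_erase_of_mem (Finset.mem_univ v), Finset.card_univ]
    omega
  rw [← hcard2, ← Finset.card_powersetCard]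
  refine Finset.card_bij' (fun A _ => A.erase u) (fun B _ => insert u B) ?_ ?_ ?_ ?_
  · intro A hA
    simp only [Finset.mem_filter, Finset.mem_powersetCard] at hA
    obtain ⟨⟨_, hAc⟩, hu, hv⟩ := hA
    simp only [Finset.mem_powersetCard]
    constructor
    · intro x hx
      simp only [Finset.mem_erase] at hx ⊢
      exact ⟨hx.1, fun hxv => hv (hxv ▸ hx.2), Finset.mem_univ x⟩
    · rw [Finset.card_erase_of_mem hu, hAc]
  · intro B hB
    simp only [Finset.mem_powersetCard] at hB
    obtain ⟨hBs, hBc⟩ := hB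
    have huB : u ∉ B := fun h => by simpa using (hBs h)
    have hvB : v ∉ B := fun h => by
      have := hBs h; simp at this
    simp only [Finset.mem_filter, Finset.mem_powersetCard]
    refine ⟨⟨by intro x _; exact Finset.mem_univ x, ?_⟩, Finset.mem_insert_self u B, ?_⟩
    · rw [Finset.card_insert_of_notMem huB, hBc]
      omega
    · simp only [Finset.mem_insert]
      push_neg
      exact ⟨Ne.symm huv, hvB⟩
  · intro A hA
    simp only [Finset.mem_filter] at hA
    exact Finset.insert_erase hA.2.1
  · intro B hB
    simp only [Finset.mem_powersetCard] at hB
    have huB : u ∉ B := fun h => by simpa using (hB.1 h)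
    exact Finset.erase_insert huB

open Finset in
lemma double_count [Fintype V] [DecidableEq V] (S : Finset (Finset V))
    (Q : V × V → Prop) [DecidablePred Q] (N : ℕ)
    (hN : ∀ p : V × V, Q p → (S.filter fun A => p.1 ∈ A ∧ p.2 ∉ A).card = N) :
    ∑ A ∈ S, ((Finset.univ : Finset (V × V)).filter fun p => Q p ∧ p.1 ∈ A ∧ p.2 ∉ A).card
      = ((Finset.univ : Finset (V × V)).filter Q).card * N := by
  have step : ∀ A : Finset V,
      ((Finset.univ : Finset (V × V)).filter fun p => Q p ∧ p.1 ∈ A ∧ p.2 ∉ A).card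
        = ∑ p ∈ (Finset.univ : Finset (V × V)).filter Q,
            (if p.1 ∈ A ∧ p.2 ∉ A then 1 else 0) := by
    intro A
    rw [Finset.card_filter, Finset.sum_filter]
    congr 1
    ext p
    rw [ite_and]
  calc ∑ A ∈ S, ((Finset.univ : Finset (V × V)).filter fun p => Q p ∧ p.1 ∈ A ∧ p.2 ∉ A).card
      = ∑ A ∈ S, ∑ p ∈ (Finset.univ : Finset (V × V)).filter Q,
          (if p.1 ∈ A ∧ p.2 ∉ A then 1 else 0) := Finset.sum_congr rfl fun A _ => step A
    _ = ∑ p ∈ (Finset.univ : Finset (V × V)).filter Q, ∑ A ∈ S,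
          (if p.1 ∈ A ∧ p.2 ∉ A then 1 else 0) := Finset.sum_comm
    _ = ∑ p ∈ (Finset.univ : Finset (V × V)).filter Q, N := by
        refine Finset.sum_congr rfl fun p hp => ?_
        rw [← Finset.card_filter]
        exact hN p (Finset.mem_filter.mp hp).2
    _ = ((Finset.univ : Finset (V × V)).filter Q).card * N := by
        rw [Finset.sum_const, smul_eq_mul]

/-- for `n ≥ 4`, `σ⁻(G) ≤ ⌊m/2 + n/4⌋`. -/
theorem stmt13 [Fintype V] [DecidableEq V] (G : SimpleGraph V) [DecidableRel G.Adj]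
    (hconn : G.Connected) (hn : 4 ≤ Fintype.card V) :
    rna G ≤ (2 * G.edgeSet.ncard + Fintype.card V) / 4 := by
  classical
  set n := Fintype.card V with hn_def
  set k := n / 2 with hk_def
  set m := G.edgeFinset.card with hm_def
  set N := (n - 2).choose (k - 1) with hN_def
  set S := (Finset.univ : Finset V).powersetCard k with hS_def
  -- cut as a filter over all pairs
  have cut_eq : ∀ A : Finset V, cut G A =
      ((Finset.univ : Finset (V × V)).filter
        fun p => G.Adj p.1 p.2 ∧ p.1 ∈ A ∧ p.2 ∉ A).card := by
    intro A
    unfold cut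
    congr 1
    ext ⟨a, b⟩
    simp only [Finset.mem_filter, Finset.mem_product, Finset.mem_compl, Finset.mem_univ,
      true_and]
    tauto
  have prod_eq : ∀ A : Finset V,
      ((Finset.univ : Finset (V × V)).filter
        fun p => p.1 ≠ p.2 ∧ p.1 ∈ A ∧ p.2 ∉ A).card = A.card * (Aᶜ : Finset V).card := by
    intro A
    rw [← Finset.card_product]
    congr 1
    ext ⟨a, b⟩
    simp only [Finset.mem_filter, Finset.mem_product, Finset.mem_compl, Finset.mem_univ,
      true_and]
    constructor
    · rintro ⟨-, h1, h2⟩; exact ⟨h1, h2⟩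
    · rintro ⟨h1, h2⟩; exact ⟨fun h => h2 (h ▸ h1), h1, h2⟩
  have hNcount : ∀ p : V × V, p.1 ≠ p.2 →
      (S.filter fun A => p.1 ∈ A ∧ p.2 ∉ A).card = N := fun p hp =>
    count_pair p.1 p.2 hp k (by omega)
  -- sum of cuts
  have sum1 : ∑ A ∈ S, cut G A =
      ((Finset.univ : Finset (V × V)).filter fun p : V × V => G.Adj p.1 p.2).card * N := by
    rw [Finset.sum_congr rfl fun A _ => cut_eq A]
    exact double_count S (fun p => G.Adj p.1 p.2) N fun p hp => hNcount p hp.ne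
  -- sum of products
  have sum2 : S.card * (k * (n - k)) =
      ((Finset.univ : Finset (V × V)).filter fun p : V × V => p.1 ≠ p.2).card * N := by
    rw [← double_count S (fun p : V × V => p.1 ≠ p.2) N fun p hp => hNcount p hp]
    rw [Finset.sum_congr rfl fun A _ => prod_eq A]
    rw [Finset.sum_congr rfl (g := fun _ => k * (n - k)) ?_, Finset.sum_const, smul_eq_mul]
    intro A hA
    rw [Finset.mem_powersetCard] at hA
    rw [Finset.card_compl, hA.2, ← hn_def]
  -- the count of ordered distinct pairs
  have ne_card : ((Finset.univ : Finset (V × V)).filter fun p : V × V => p.1 ≠ p.2).card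
      = n * n - n := by
    have : ((Finset.univ : Finset (V × V)).filter fun p : V × V => p.1 ≠ p.2)
        = (Finset.univ : Finset V).offDiag := by
      ext ⟨a, b⟩
      simp [Finset.mem_offDiag]
    rw [this, Finset.offDiag_card, Finset.card_univ, ← hn_def]
  -- twice the number of edges
  have hm2 : ((Finset.univ : Finset (V × V)).filter fun p : V × V => G.Adj p.1 p.2).card
      = 2 * m := by
    rw [hm_def, SimpleGraph.two_mul_card_edgeFinset]
  -- 2m ≤ n² - n
  have h2m : 2 * m ≤ n * n - n := by
    rw [← hm2, ← ne_card]
    apply Finset.card_le_card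
    intro p hp
    simp only [Finset.mem_filter, Finset.mem_univ, true_and] at hp ⊢
    exact hp.ne
  have hnn : n ≤ n * n := Nat.le_mul_of_pos_left n (by omega)
  set t := n * n - n with ht_def
  have ht : t + n = n * n := Nat.sub_add_cancel hnn
  set j := n - k with hj_def
  have hkj : k + j = n := by omega
  have hkle : k ≤ j := by omega
  have hjle : j ≤ k + 1 := by omega
  have hkjpos : 0 < k * j := Nat.mul_pos (by omega) (by omega)
  -- key arithmetic inequality
  have h4 : 4 * (k * j) ≤ t + n := by
    rw [ht, ← hkj]
    have : j = k ∨ j = k + 1 := by omega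
    rcases this with h | h <;> rw [h] <;> nlinarith
  have hkey : 8 * m * (k * j) ≤ (2 * m + n) * t :=
    calc 8 * m * (k * j) = 2 * m * (4 * (k * j)) := by ring
      _ ≤ 2 * m * (t + n) := Nat.mul_le_mul_left _ h4
      _ = 2 * m * t + 2 * m * n := by ring
      _ ≤ 2 * m * t + t * n := Nat.add_le_add_left (Nat.mul_le_mul_right n h2m) _
      _ = (2 * m + n) * t := by ring
  have hS_ne : S.Nonempty := Finset.powersetCard_nonempty.2 (by rw [Finset.card_univ]; omega)
  have hS_pos : 0 < S.card := Finset.card_pos.2 hS_ne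
  -- find a good A
  obtain ⟨A, hAS, hA4⟩ : ∃ A ∈ S, 4 * cut G A ≤ 2 * m + n := by
    by_contra hcon
    push_neg at hcon
    have hlow : ∀ A ∈ S, 2 * m + n + 1 ≤ 4 * cut G A := fun A hA => hcon A hA
    have hsum : S.card * (2 * m + n + 1) ≤ ∑ A ∈ S, 4 * cut G A := by
      have := Finset.card_nsmul_le_sum S (fun A => 4 * cut G A) (2 * m + n + 1) hlow
      simpa [smul_eq_mul] using this
    have hsum2 : ∑ A ∈ S, 4 * cut G A = 8 * m * N := by
      rw [← Finset.mul_sum, sum1, hm2]; ring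
    have hcmp : 8 * m * N * (k * j) ≤ (2 * m + n) * S.card * (k * j) := by
      calc 8 * m * N * (k * j) = 8 * m * (k * j) * N := by ring
        _ ≤ (2 * m + n) * t * N := Nat.mul_le_mul_right N hkey
        _ = (2 * m + n) * (t * N) := by ring
        _ = (2 * m + n) * (S.card * (k * j)) := by rw [sum2, ne_card]
        _ = (2 * m + n) * S.card * (k * j) := by ring
    have hcancel : 8 * m * N ≤ (2 * m + n) * S.card :=
      Nat.le_of_mul_le_mul_right (by simpa [Nat.mul_assoc] using hcmp) hkjpos
    have : S.card * (2 * m + n + 1) ≤ (2 * m + n) * S.card :=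
      (hsum.trans (le_of_eq hsum2)).trans hcancel
    nlinarith
  -- A is balanced
  have hAcard : A.card = k := by
    rw [hS_def, Finset.mem_powersetCard] at hAS
    exact hAS.2
  have hbal : Balanced A := by
    unfold Balanced
    rw [Finset.card_compl, hAcard, ← hn_def]
    rw [abs_le]
    constructor <;> [skip; skip] <;>
    · push_cast [Nat.cast_sub (show k ≤ n by omega)]
      omega
  -- conclude
  have hrna : rna G ≤ cut G A := Nat.sInf_le ⟨A, hbal, rfl⟩
  have hncard : G.edgeSet.ncard = m := by
    rw [← SimpleGraph.coe_edgeFinset, Set.ncard_coe_finset]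
  rw [hncard]
  rw [Nat.le_div_iff_mul_le (by norm_num : 0 < 4)]
  calc rna G * 4 = 4 * rna G := by ring
    _ ≤ 4 * cut G A := by omega
    _ ≤ 2 * m + n := hA4


end PSG
end

section
/- Let S=(G,σ) be a parity signed graph with parity sets V₁, V₂ such that the number of negative edges of S equals σ⁻(G) (the minimum over all parity signatures). Then for every u ∈ V₁ and v ∈ V₂: dᐃ(u)+dᐃ(v) ≤ 2 if uv is an edge of G, and dᐃ(u)+dᐃ(v) ≤ 0 if uv is not an edge of G. -/
open scoped Classical

variable {V : Type*}

namespace PSG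

section Aux18
set_option linter.unusedSectionVars false
variable [Fintype V] [DecidableEq V] (G : SimpleGraph V) [DecidableRel G.Adj]

/-- indicator of a crossing adjacent pair -/
private def sInd (A : Finset V) (a b : V) : ℤ :=
  if G.Adj a b ∧ ¬(a ∈ A ↔ b ∈ A) then 1 else 0

/-- signed indicator whose sum over `x` is `dDelta G A w` -/
private def dInd (A : Finset V) (w x : V) : ℤ :=
  (if G.Adj w x ∧ ¬(x ∈ A ↔ w ∈ A) then 1 else 0) -
  (if G.Adj w x ∧ (x ∈ A ↔ w ∈ A) then 1 else 0)

private lemma dDelta_eq (A : Finset V) (w : V) :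
    dDelta G A w = ∑ x, dInd G A w x := by
  unfold dDelta dneg dpos dInd
  rw [Finset.sum_sub_distrib, Finset.card_filter, Finset.card_filter]
  push_cast
  ring

private lemma cut_eq (A : Finset V) :
    (cut G A : ℤ) = ∑ a, ∑ b, (if G.Adj a b ∧ a ∈ A ∧ b ∉ A then (1:ℤ) else 0) := by
  have h : ((A ×ˢ (Aᶜ : Finset V)).filter fun p => G.Adj p.1 p.2)
      = (Finset.univ ×ˢ Finset.univ).filter
          (fun p : V × V => G.Adj p.1 p.2 ∧ p.1 ∈ A ∧ p.2 ∉ A) := by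
    ext p
    simp [Finset.mem_product, Finset.mem_compl]
    tauto
  rw [cut, h, Finset.card_filter]
  push_cast
  rw [Finset.sum_product]

private lemma F_eq (A : Finset V) :
    ∑ a, ∑ b, sInd G A a b = 2 * (cut G A : ℤ) := by
  have hsplit : ∀ a b : V, sInd G A a b =
      (if G.Adj a b ∧ a ∈ A ∧ b ∉ A then (1:ℤ) else 0)
      + (if G.Adj a b ∧ a ∉ A ∧ b ∈ A then (1:ℤ) else 0) := by
    intro a b
    unfold sInd
    by_cases h : G.Adj a b <;> by_cases ha : a ∈ A <;> by_cases hb : b ∈ A <;>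
      simp [h, ha, hb]
  have hswap : ∑ a, ∑ b, (if G.Adj a b ∧ a ∉ A ∧ b ∈ A then (1:ℤ) else 0)
      = ∑ a, ∑ b, (if G.Adj a b ∧ a ∈ A ∧ b ∉ A then (1:ℤ) else 0) := by
    rw [Finset.sum_comm]
    refine Finset.sum_congr rfl fun a _ => Finset.sum_congr rfl fun b _ => ?_
    refine if_congr ?_ rfl rfl
    rw [G.adj_comm]
    tauto
  simp only [hsplit, Finset.sum_add_distrib, hswap, cut_eq]
  ring

private lemma key (A : Finset V) (u v : V) (hu : u ∈ A) (hv : v ∉ A) (a b : V) :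
    sInd G (insert v (A.erase u)) a b =
      sInd G A a b
      - (if a = u then dInd G A u b else 0)
      - (if b = u then dInd G A u a else 0)
      - (if a = v then dInd G A v b else 0)
      - (if b = v then dInd G A v a else 0)
      + ((if a = u ∧ b = v then (if G.Adj u v then (2:ℤ) else 0) else 0)
        + (if a = v ∧ b = u then (if G.Adj u v then (2:ℤ) else 0) else 0)) := by
  have huv : u ≠ v := fun h => hv (h ▸ hu)
  unfold sInd dInd
  by_cases hau : a = u <;> by_cases hav : a = v <;>
    by_cases hbu : b = u <;> by_cases hbv : b = v <;>
    subst_vars <;>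
    simp_all [Finset.mem_insert, Finset.mem_erase, G.adj_comm, SimpleGraph.irrefl] <;>
    split_ifs <;> omega

private lemma swap_cut (A : Finset V) (u v : V) (hu : u ∈ A) (hv : v ∉ A) :
    2 * (cut G (insert v (A.erase u)) : ℤ)
      = 2 * (cut G A : ℤ) - 2 * dDelta G A u - 2 * dDelta G A v
        + (if G.Adj u v then 4 else 0) := by
  rw [← F_eq]
  simp only [key G A u v hu hv]
  simp only [Finset.sum_add_distrib, Finset.sum_sub_distrib]
  have e1 : ∀ w : V, ∑ a, ∑ b, (if a = w then dInd G A w b else 0) = dDelta G A w := by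
    intro w
    have h : ∀ a : V, ∑ b, (if a = w then dInd G A w b else 0)
        = if a = w then dDelta G A w else 0 := by
      intro a; by_cases h : a = w <;> simp [h, dDelta_eq]
    rw [Finset.sum_congr rfl (fun a _ => h a), Finset.sum_ite_eq' Finset.univ w]
    simp
  have e2 : ∀ w : V, ∑ a, ∑ b, (if b = w then dInd G A w a else 0) = dDelta G A w := by
    intro w
    have h : ∀ a : V, ∑ b, (if b = w then dInd G A w a else 0) = dInd G A w a := by
      intro a; rw [Finset.sum_ite_eq' Finset.univ w]; simp
    rw [Finset.sum_congr rfl (fun a _ => h a), ← dDelta_eq]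
  have e3 : ∀ (x y : V) (c : ℤ), ∑ a, ∑ b, (if a = x ∧ b = y then c else 0) = c := by
    intro x y c
    have h : ∀ a : V, ∑ b, (if a = x ∧ b = y then c else 0)
        = if a = x then c else 0 := by
      intro a
      by_cases hax : a = x
      · simp only [hax, true_and]; rw [Finset.sum_ite_eq' Finset.univ y]; simp
      · simp [hax]
    rw [Finset.sum_congr rfl (fun a _ => h a), Finset.sum_ite_eq' Finset.univ x]
    simp
  rw [e1 u, e1 v, e2 u, e2 v, e3, e3, F_eq]
  split_ifs <;> ring

end Aux18

/-- in a minimum parity signed graph, for `u ∈ V₁`, `v ∈ V₂`: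
`dᐃ(u)+dᐃ(v) ≤ 2` if `uv ∈ E(G)` and `dᐃ(u)+dᐃ(v) ≤ 0` otherwise. -/
theorem stmt18 [Fintype V] [DecidableEq V] (G : SimpleGraph V) [DecidableRel G.Adj]
    (A : Finset V) (hA : Balanced A) (hmin : cut G A = rna G) :
    ∀ u ∈ A, ∀ v ∈ (Aᶜ : Finset V),
      (G.Adj u v → dDelta G A u + dDelta G A v ≤ 2) ∧
      (¬ G.Adj u v → dDelta G A u + dDelta G A v ≤ 0) := by
  intro u hu v hv
  rw [Finset.mem_compl] at hv
  have hcard : (insert v (A.erase u)).card = A.card := by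
    rw [Finset.card_insert_of_notMem (fun h => hv (Finset.mem_of_mem_erase h)),
      Finset.card_erase_of_mem hu]
    exact Nat.succ_pred_eq_of_pos (Finset.card_pos.mpr ⟨u, hu⟩)
  have hbal : Balanced (insert v (A.erase u)) := by
    rw [Balanced, Finset.card_compl, hcard, ← Finset.card_compl]
    exact hA
  have hmem : cut G (insert v (A.erase u)) ∈ sigmaSet G :=
    ⟨insert v (A.erase u), hbal, rfl⟩
  have hle : cut G A ≤ cut G (insert v (A.erase u)) := by
    rw [hmin, rna]; exact Nat.sInf_le hmem
  have hle' : (cut G A : ℤ) ≤ (cut G (insert v (A.erase u)) : ℤ) := by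
    exact_mod_cast hle
  have hswap := swap_cut G A u v hu hv
  constructor
  · intro hadj
    rw [if_pos hadj] at hswap
    linarith
  · intro hadj
    rw [if_neg hadj] at hswap
    linarith


end PSG
end
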